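/- arXiv:0903.0761 — 3 statements merged into one kernel-verified Lean document; each statement's English description precedes it below -/
import Mathlib

section
/- Let 0 → A →g B →f C → 0 be a non-split short exact sequence in mod Λ. If g is left minimal, then Ext_Λ^1(C', A) ≠ 0 for every non-zero direct summand C' of C. -/
open CategoryTheory CategoryTheory.Limits

section Preamble

variable {Λ : Type} [Ring Λ]

/-- `f : P ⟶ M` is a projective cover: `P` is projective, `f` is a surjective
essential epimorphism. -/
def IsProjCover {P M : ModuleCat.{0} Λ} (f : P ⟶ M) : Prop :=
  Projective P ∧ Function.Surjective f ∧
    ∀ Q : Submodule Λ P, Submodule.map f.hom Q = ⊤ → Q = ⊤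

/-- `f : M ⟶ I` is an injective envelope: `I` is injective, `f` is an injective
essential extension. -/
def IsInjEnv {M I : ModuleCat.{0} Λ} (f : M ⟶ I) : Prop :=
  Injective I ∧ Function.Injective f ∧
    ∀ Q : Submodule Λ I, Q ≠ ⊥ → Q ⊓ LinearMap.range f.hom ≠ ⊥

/-- `IsSyzygy n K M` : `K` is an `n`-th syzygy `Ω^n M` of `M`, computed with
minimal projective resolutions (i.e. iterated kernels of projective covers). -/
inductive IsSyzygy : ℕ → ModuleCat.{0} Λ → ModuleCat.{0} Λ → Prop
  | zero (M : ModuleCat.{0} Λ) : IsSyzygy 0 M M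
  | succ {n : ℕ} {K K₁ M P : ModuleCat.{0} Λ} (f : P ⟶ M) (i : K₁ ⟶ P) :
      IsProjCover f → Function.Injective i →
      LinearMap.range i.hom = LinearMap.ker f.hom →
      IsSyzygy n K K₁ → IsSyzygy (n + 1) K M

/-- `IsCosyzygy n C M` : `C` is an `n`-th cosyzygy `Ω^{-n} M` of `M`, computed with
minimal injective resolutions (i.e. iterated cokernels of injective envelopes). -/
inductive IsCosyzygy : ℕ → ModuleCat.{0} Λ → ModuleCat.{0} Λ → Prop
  | zero (M : ModuleCat.{0} Λ) : IsCosyzygy 0 M M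
  | succ {n : ℕ} {C C₁ M I : ModuleCat.{0} Λ} (f : M ⟶ I) (p : I ⟶ C₁) :
      IsInjEnv f → Function.Surjective p →
      LinearMap.ker p.hom = LinearMap.range f.hom →
      IsCosyzygy n C C₁ → IsCosyzygy (n + 1) C M

/-- projective dimension ≤ n : the n-th minimal syzygy is projective. -/
def PdLE (M : ModuleCat.{0} Λ) (n : ℕ) : Prop :=
  ∃ K : ModuleCat.{0} Λ, IsSyzygy n K M ∧ Projective K

/-- projective dimension = n. -/
def PdEq (M : ModuleCat.{0} Λ) (n : ℕ) : Prop :=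
  PdLE M n ∧ ∀ m : ℕ, PdLE M m → n ≤ m

/-- injective dimension ≤ n : the n-th minimal cosyzygy is injective. -/
def IdLE (M : ModuleCat.{0} Λ) (n : ℕ) : Prop :=
  ∃ C : ModuleCat.{0} Λ, IsCosyzygy n C M ∧ Injective C

/-- injective dimension = n. -/
def IdEq (M : ModuleCat.{0} Λ) (n : ℕ) : Prop :=
  IdLE M n ∧ ∀ m : ℕ, IdLE M m → n ≤ m

/-- `M` is an indecomposable module. -/
def Indec (M : ModuleCat.{0} Λ) : Prop :=
  Nontrivial M ∧ ∀ A B : Submodule Λ M, IsCompl A B → A = ⊥ ∨ B = ⊥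

/-- `X` is a direct summand of `Z`. -/
def IsSummand (X Z : ModuleCat.{0} Λ) : Prop :=
  ∃ (s : X ⟶ Z) (r : Z ⟶ X), s ≫ r = 𝟙 X

/-- `I` is the `i`-th term of the minimal injective resolution of `M`, i.e. the
injective envelope of the `i`-th cosyzygy of `M`. -/
def IsInjTerm (i : ℕ) (I M : ModuleCat.{0} Λ) : Prop :=
  ∃ C : ModuleCat.{0} Λ, IsCosyzygy i C M ∧ ∃ f : C ⟶ I, IsInjEnv f

/-- `P` is the `i`-th term of the minimal projective resolution of `M`, i.e. the
projective cover of the `i`-th syzygy of `M`. -/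
def IsProjTerm (i : ℕ) (P M : ModuleCat.{0} Λ) : Prop :=
  ∃ K : ModuleCat.{0} Λ, IsSyzygy i K M ∧ ∃ f : P ⟶ K, IsProjCover f

end Preamble

section GD

variable (Λ : Type) [Ring Λ]

/-- The global dimension of `Λ` (computed on `mod Λ`, the finitely generated
left `Λ`-modules) equals `n`. -/
def GlDimEq (n : ℕ) : Prop :=
  (∀ M : ModuleCat.{0} Λ, Module.Finite Λ M → PdLE M n) ∧
    ∃ M : ModuleCat.{0} Λ, Module.Finite Λ M ∧ ∀ m : ℕ, m < n → ¬ PdLE M m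

/-- `Λ` is an `(n-1)`-Auslander algebra with global dimension `n`:
`gl.dim Λ = n` and the terms `I⁰(Λ), …, I^{n-1}(Λ)` of the minimal injective
resolution of the regular module are projective. -/
def IsAuslander (n : ℕ) : Prop :=
  GlDimEq Λ n ∧ ∀ i : ℕ, i < n → ∀ I : ModuleCat.{0} Λ,
    IsInjTerm i I (ModuleCat.of Λ Λ) → Projective I

/-- `Ext^i_Λ(X, Y) = 0`. -/
def ExtIsZero (i : ℕ) (X Y : ModuleCat.{0} Λ) : Prop :=
  Subsingleton (((Ext ℤ (ModuleCat.{0} Λ) i).obj (Opposite.op X)).obj Y)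

/-- A class `𝒞` of (finitely generated) modules is contravariantly finite in `mod Λ`. -/
def ContravFinite (𝒞 : ModuleCat.{0} Λ → Prop) : Prop :=
  ∀ M : ModuleCat.{0} Λ, Module.Finite Λ M →
    ∃ (X : ModuleCat.{0} Λ) (f : X ⟶ M), 𝒞 X ∧
      ∀ (Y : ModuleCat.{0} Λ) (g : Y ⟶ M), 𝒞 Y → ∃ h : Y ⟶ X, h ≫ f = g

/-- A class `𝒞` of (finitely generated) modules is covariantly finite in `mod Λ`. -/
def CovarFinite (𝒞 : ModuleCat.{0} Λ → Prop) : Prop :=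
  ∀ M : ModuleCat.{0} Λ, Module.Finite Λ M →
    ∃ (X : ModuleCat.{0} Λ) (f : M ⟶ X), 𝒞 X ∧
      ∀ (Y : ModuleCat.{0} Λ) (g : M ⟶ Y), 𝒞 Y → ∃ h : X ⟶ Y, f ≫ h = g

/-- `𝒞` is a maximal `m`-orthogonal subcategory of `mod Λ`: it is functorially
finite and coincides with both of its `m`-orthogonal classes. -/
def MaxOrthogonal (m : ℕ) (𝒞 : ModuleCat.{0} Λ → Prop) : Prop :=
  (∀ X, 𝒞 X → Module.Finite Λ X) ∧
  ContravFinite Λ 𝒞 ∧ CovarFinite Λ 𝒞 ∧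
  (∀ X : ModuleCat.{0} Λ, Module.Finite Λ X →
    (𝒞 X ↔ ∀ Y, 𝒞 Y → ∀ i, 1 ≤ i → i ≤ m → ExtIsZero Λ i X Y)) ∧
  (∀ X : ModuleCat.{0} Λ, Module.Finite Λ X →
    (𝒞 X ↔ ∀ Y, 𝒞 Y → ∀ i, 1 ≤ i → i ≤ m → ExtIsZero Λ i Y X))

/-- The class `add (Λ ⊕ DΛ^op)`: finitely generated modules which are direct
summands of (finitely generated projective) ⊕ (finitely generated injective). -/
def AddProjInj (X : ModuleCat.{0} Λ) : Prop :=
  Module.Finite Λ X ∧ ∃ P I : ModuleCat.{0} Λ, Module.Finite Λ P ∧ Module.Finite Λ I ∧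
    Projective P ∧ Injective I ∧ IsSummand X (P ⊞ I)

/-- `Λ` admits a trivial maximal `m`-orthogonal subcategory of `mod Λ`, namely
`add (Λ ⊕ DΛ^op)`. -/
def HasTrivialMaxOrthogonal (m : ℕ) : Prop :=
  MaxOrthogonal Λ m (AddProjInj Λ)

end GD

/-!
Take a retraction `r : C ⟶ C'` with section `s`. Vanishing of `Ext¹(C', A)` lifts `s` along
`f` to some `t : C' ⟶ B`. Then `h = 𝟙 - f ≫ r ≫ t` fixes `g`, so it is an automorphism by
left minimality; since `h ≫ f = f ≫ (𝟙 - r ≫ s)`, the idempotent `𝟙 - r ≫ s` complementary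
to `C'` is an epimorphism, which forces `C' = 0`.
-/

namespace CategoryTheory

section LeftMinimal

variable {C : Type*} [Category C] [Preadditive C]

def IsLeftMinimal {A B : C} (g : A ⟶ B) : Prop :=
  ∀ h : B ⟶ B, g ≫ h = g → IsIso h

lemma IsLeftMinimal.isZero_of_retract_of_lift {A B Z X : C} {g : A ⟶ B} {f : B ⟶ Z} [Epi f]
    (hmin : IsLeftMinimal g) (hgf : g ≫ f = 0) {s : X ⟶ Z} {r : Z ⟶ X} (hsr : s ≫ r = 𝟙 X)
    {t : X ⟶ B} (ht : t ≫ f = s) : IsZero X := by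
  let h : B ⟶ B := 𝟙 B - f ≫ r ≫ t
  have : IsIso h := hmin h (by
    rw [Preadditive.comp_sub, Category.comp_id, reassoc_of% hgf, zero_comp, sub_zero])
  have hhf : h ≫ f = f ≫ (𝟙 Z - r ≫ s) := by
    simp only [h, Preadditive.sub_comp, Preadditive.comp_sub, Category.assoc, ht,
      Category.id_comp, Category.comp_id]
  have : Epi (f ≫ (𝟙 Z - r ≫ s)) := hhf ▸ inferInstance
  have : Epi (𝟙 Z - r ≫ s) := epi_of_epi f _
  have hr : r = 0 := (cancel_epi (𝟙 Z - r ≫ s)).1 (by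
    rw [comp_zero, Preadditive.sub_comp, Category.assoc, hsr, Category.id_comp,
      Category.comp_id, sub_self])
  rw [IsZero.iff_id_eq_zero, ← hsr, hr, comp_zero]

end LeftMinimal

variable {C : Type*} [Category C] [Abelian C] [EnoughProjectives C]

lemma ProjectiveResolution.exists_d_comp_eq_of_subsingleton_ext {X Y : C}
    (P : ProjectiveResolution X) [Subsingleton (((Ext ℤ C 1).obj (Opposite.op X)).obj Y)]
    (φ : P.complex.X 1 ⟶ Y) (hφ : P.complex.d 2 1 ≫ φ = 0) :
    ∃ ψ : P.complex.X 0 ⟶ Y, P.complex.d 1 0 ≫ ψ = φ := by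
  let K := P.complex.linearYonedaObj ℤ Y
  have : Subsingleton (K.homology 1) :=
    ((forget (ModuleCat ℤ)).mapIso (P.isoExt 1 Y)).toEquiv.symm.subsingleton
  have hK : (K.sc' 0 1 2).Exact := (K.exactAt_iff' 0 1 2 (by simp) (by simp)).1
    ((K.exactAt_iff_isZero_homology 1).2 (ModuleCat.isZero_of_subsingleton _))
  exact (ShortComplex.moduleCat_exact_iff _).1 hK φ hφ

lemma ShortComplex.ShortExact.exists_lift_of_subsingleton_ext {S : ShortComplex C}
    (hS : S.ShortExact) {X : C} [Subsingleton (((Ext ℤ C 1).obj (Opposite.op X)).obj S.X₁)]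
    (s : X ⟶ S.X₃) : ∃ t : X ⟶ S.X₂, t ≫ S.g = s := by
  have := hS.mono_f
  have := hS.epi_g
  let P : ProjectiveResolution X := (HasProjectiveResolution.out (Z := X)).some
  let u := Projective.factorThru (P.π.f 0 ≫ s) S.g
  have hu : u ≫ S.g = P.π.f 0 ≫ s := Projective.factorThru_comp _ _
  -- `d₁ ≫ u` lands in `S.X₁` as a 1-cocycle `φ`, which `Ext¹ = 0` makes a coboundary `d₁ ≫ ψ`;
  -- then `u - ψ ≫ S.f` vanishes on the image of `d₁` and descends to `X`.
  obtain ⟨φ, hφ⟩ := hS.exact.lift' (P.complex.d 1 0 ≫ u) (by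
    rw [Category.assoc, hu]; exact (P.complex_d_comp_π_f_zero_assoc s).trans zero_comp)
  obtain ⟨ψ, hψ⟩ := P.exists_d_comp_eq_of_subsingleton_ext φ (by
    rw [← cancel_mono S.f, Category.assoc, hφ, ← Category.assoc, HomologicalComplex.d_comp_d,
      zero_comp, zero_comp])
  obtain ⟨t, ht : P.π.f 0 ≫ t = u - ψ ≫ S.f⟩ := P.exact₀.desc' (u - ψ ≫ S.f) (by
    rw [Preadditive.comp_sub, ← Category.assoc, hψ, hφ, sub_self])
  refine ⟨t, (cancel_epi (P.π.f 0)).1 ((Category.assoc _ _ _).symm.trans ?_)⟩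
  rw [ht, Preadditive.sub_comp, hu, Category.assoc, S.zero, comp_zero, sub_zero]

end CategoryTheory

theorem stmt2_general (Λ : Type) [Ring Λ]
    (A B C : ModuleCat.{0} Λ)
    (g : A ⟶ B) (f : B ⟶ C)
    (hg : Function.Injective g) (hf : Function.Surjective f)
    (hex : LinearMap.range g.hom = LinearMap.ker f.hom)
    (hmin : ∀ h : B ⟶ B, g ≫ h = g → IsIso h) :
    ∀ C' : ModuleCat.{0} Λ, Nontrivial C' → IsSummand C' C → ¬ ExtIsZero Λ 1 C' A := by
  rintro C' hC' ⟨s, r, hsr⟩ hext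
  have : Epi f := (ModuleCat.epi_iff_surjective f).2 hf
  let S := ShortComplex.moduleCatMkOfKerLERange g f hex.le
  have hS : S.ShortExact :=
    { exact := ShortComplex.Exact.moduleCat_of_range_eq_ker g f hex
      mono_f := (ModuleCat.mono_iff_injective g).2 hg
      epi_g := this }
  have : Subsingleton (((Ext ℤ (ModuleCat.{0} Λ) 1).obj (Opposite.op C')).obj S.X₁) := hext
  obtain ⟨t, ht⟩ := hS.exists_lift_of_subsingleton_ext s
  exact not_subsingleton C' (ModuleCat.isZero_iff_subsingleton.1
    (IsLeftMinimal.isZero_of_retract_of_lift (f := f) hmin S.zero hsr ht))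

/-- if `g` is left minimal in a non-split short exact sequence, then
`Ext¹(C', A) ≠ 0` for every non-zero direct summand `C'` of `C`. -/
theorem stmt2 (Λ : Type) [Ring Λ] [IsArtinianRing Λ]
    (A B C : ModuleCat.{0} Λ)
    (hA : Module.Finite Λ A) (hB : Module.Finite Λ B) (hC : Module.Finite Λ C)
    (g : A ⟶ B) (f : B ⟶ C)
    (hg : Function.Injective g) (hf : Function.Surjective f)
    (hex : LinearMap.range g.hom = LinearMap.ker f.hom)
    (hns : ¬ ∃ r : B ⟶ A, g ≫ r = 𝟙 A)
    (hmin : ∀ h : B ⟶ B, g ≫ h = g → IsIso h) :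
    ∀ C' : ModuleCat.{0} Λ, Nontrivial C' → IsSummand C' C → ¬ ExtIsZero Λ 1 C' A :=
  stmt2_general Λ A B C g f hg hf hex hmin
end

section
/- Let 0 → A →g B →f C → 0 be a non-split short exact sequence in mod Λ. If f is right minimal, then Ext_Λ^1(C, A') ≠ 0 for every non-zero direct summand A' of A. -/
/-!
Right minimality of `f` rules out a non-zero direct summand of `B` inside `ker f`: if `k : A' ⟶ B`
has a retraction `t` and `k ≫ f = 0`, then `𝟙 - t ≫ k` fixes `f` but kills `k`.
When `Ext¹(C, A') = 0`, the retraction `A ⟶ A'` of a summand `A'` of `A` extends along `g`, and this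
extension is such a `t`. The extension is built on a projective resolution `P` of `C`: `B` is the
pushout of `P₀ ← P₁ → A`, and `Ext¹(C, A') = 0` makes the cocycle `P₁ → A ⟶ A'` a coboundary.
-/

open CategoryTheory CategoryTheory.Limits

theorem LinearMap.exists_comp_eq_of_surjective_of_ker_le {R M N P : Type*} [Ring R]
    [AddCommGroup M] [Module R M] [AddCommGroup N] [Module R N] [AddCommGroup P] [Module R P]
    {u : M →ₗ[R] N} (hu : Function.Surjective u) {v : M →ₗ[R] P} (h : ker u ≤ ker v) :
    ∃ t : N →ₗ[R] P, t ∘ₗ u = v :=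
  ⟨(ker u).liftQ v h ∘ₗ (u.quotKerEquivOfSurjective hu).symm.toLinearMap, by ext; simp⟩

def IsRightMinimal {𝒜 : Type*} [Category 𝒜] {B C : 𝒜} (f : B ⟶ C) : Prop :=
  ∀ h : B ⟶ B, h ≫ f = f → IsIso h

theorem IsRightMinimal.isZero_of_comp_eq_zero {𝒜 : Type*} [Category 𝒜] [Preadditive 𝒜]
    {X B C : 𝒜} {f : B ⟶ C} (hf : IsRightMinimal f) {k : X ⟶ B} {t : B ⟶ X}
    (hk : k ≫ f = 0) (hkt : k ≫ t = 𝟙 X) : IsZero X := by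
  have : IsIso (𝟙 B - t ≫ k) := hf _ (by simp [hk])
  have hk0 : k = 0 := by
    rw [← cancel_mono (𝟙 B - t ≫ k)]
    simp [Preadditive.comp_sub, reassoc_of% hkt]
  rw [IsZero.iff_id_eq_zero, ← hkt, hk0, zero_comp]

theorem CategoryTheory.ProjectiveResolution.exists_d_comp_eq_of_subsingleton_ext_s3
    {𝒜 : Type*} [Category 𝒜] [Abelian 𝒜] [EnoughProjectives 𝒜] {X Y : 𝒜}
    (P : ProjectiveResolution X) {n : ℕ}
    (hY : Subsingleton (((Ext ℤ 𝒜 (n + 1)).obj (Opposite.op X)).obj Y))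
    (φ : P.complex.X (n + 1) ⟶ Y) (hφ : P.complex.d (n + 2) (n + 1) ≫ φ = 0) :
    ∃ ψ : P.complex.X n ⟶ Y, P.complex.d (n + 1) n ≫ ψ = φ := by
  let K := P.complex.linearYonedaObj ℤ Y
  have hK : K.ExactAt (n + 1) := by
    rw [K.exactAt_iff_isZero_homology]
    exact (ModuleCat.isZero_of_subsingleton _).of_iso (P.isoExt (n + 1) Y).symm
  rw [K.exactAt_iff' n (n + 1) (n + 2) (by simp) (by simp),
    ShortComplex.moduleCat_exact_iff] at hK
  exact hK φ hφ

namespace ModuleCat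

/-- For a presentation `P₁ ⟶ P₀ ⟶ C ⟶ 0` mapping to `0 ⟶ A ⟶ B ⟶ C` by `φ, π, 𝟙`, the square
`d, φ, π, g` is a pushout; this is the existence half of its universal property. -/
theorem exists_comp_eq_of_presentation {Λ : Type*} [Ring Λ] {P₁ P₀ A B C Y : ModuleCat Λ}
    {d : P₁ ⟶ P₀} {p : P₀ ⟶ C} {g : A ⟶ B} {f : B ⟶ C} {π : P₀ ⟶ B} {φ : P₁ ⟶ A}
    (hP : LinearMap.ker p.hom ≤ LinearMap.range d.hom) (hp : Function.Surjective p)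
    (hg : Function.Injective g) (hex : LinearMap.ker f.hom ≤ LinearMap.range g.hom)
    (hgf : g ≫ f = 0) (hπ : π ≫ f = p) (hφ : φ ≫ g = d ≫ π)
    {ψ : P₀ ⟶ Y} {r : A ⟶ Y} (hψ : d ≫ ψ = φ ≫ r) :
    ∃ t : B ⟶ Y, g ≫ t = r := by
  have hsurj : Function.Surjective (π.hom.coprod g.hom) := by
    intro b
    obtain ⟨x, hx⟩ := hp (f b)
    obtain ⟨a, ha⟩ : b - π x ∈ LinearMap.range g.hom := by
      apply hex
      rw [LinearMap.mem_ker, map_sub, ← hx, ← comp_apply, hπ, sub_self]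
    exact ⟨(x, a), by simp [ha]⟩
  have hker : LinearMap.ker (π.hom.coprod g.hom) ≤ LinearMap.ker (ψ.hom.coprod r.hom) := by
    rintro ⟨x, a⟩ (hxa : π x + g a = 0)
    obtain ⟨y, rfl⟩ : x ∈ LinearMap.range d.hom := by
      apply hP
      rw [LinearMap.mem_ker, ← hπ, comp_apply, eq_neg_of_add_eq_zero_left hxa, map_neg,
        ← comp_apply, hgf]
      simp
    have hya : φ y + a = 0 := hg (by rwa [map_add, ← comp_apply, hφ, map_zero])
    show ψ (d y) + r a = 0
    rw [← comp_apply, hψ, comp_apply, ← map_add, hya, map_zero]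
  obtain ⟨t, ht⟩ := LinearMap.exists_comp_eq_of_surjective_of_ker_le hsurj hker
  exact ⟨ofHom t, by ext a; simpa using LinearMap.congr_fun ht (0, a)⟩

theorem exists_comp_eq_of_extIsZero_one {Λ : Type} [Ring Λ] {A B C Y : ModuleCat.{0} Λ}
    {g : A ⟶ B} {f : B ⟶ C} (hg : Function.Injective g) (hf : Function.Surjective f)
    (hex : LinearMap.range g.hom = LinearMap.ker f.hom) (hY : ExtIsZero Λ 1 C Y) (r : A ⟶ Y) :
    ∃ t : B ⟶ Y, g ≫ t = r := by
  let P := CategoryTheory.projectiveResolution C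
  let d := P.complex.d 1 0
  let p : P.complex.X 0 ⟶ C := P.π.f 0
  have hP : LinearMap.range d.hom = LinearMap.ker p.hom :=
    (ShortComplex.moduleCat_exact_iff_range_eq_ker (.mk d p P.complex_d_comp_π_f_zero)).1
      (ShortComplex.exact_of_g_is_cokernel _ P.isColimitCokernelCofork)
  have hp : Function.Surjective p := (epi_iff_surjective _).1 (inferInstanceAs (Epi (P.π.f 0)))
  have : Mono g := (mono_iff_injective g).2 hg
  have hgf : g ≫ f = 0 := by ext a; exact hex.le ⟨a, rfl⟩
  have hS : (ShortComplex.mk g f hgf).Exact :=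
    (ShortComplex.moduleCat_exact_iff_range_eq_ker _).2 hex
  have : Epi f := (epi_iff_surjective f).2 hf
  obtain ⟨π, hπ⟩ : ∃ π : P.complex.X 0 ⟶ B, π ≫ f = p :=
    ⟨Projective.factorThru p f, Projective.factorThru_comp p f⟩
  let φ := hS.lift (d ≫ π) (by rw [Category.assoc, hπ]; exact P.complex_d_comp_π_f_zero)
  have hφ : φ ≫ g = d ≫ π := hS.lift_f _ _
  have hφ_cocycle : P.complex.d 2 1 ≫ φ = 0 := by
    rw [← cancel_mono g]
    simp [hφ, d]
  obtain ⟨ψ, hψ⟩ := P.exists_d_comp_eq_of_subsingleton_ext_s3 hY (φ ≫ r)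
    (by rw [reassoc_of% hφ_cocycle, zero_comp])
  exact exists_comp_eq_of_presentation hP.ge hp hg hex.ge hgf hπ hφ hψ

end ModuleCat

theorem stmt3_general (Λ : Type) [Ring Λ]
    (A B C : ModuleCat.{0} Λ)
    (g : A ⟶ B) (f : B ⟶ C)
    (hg : Function.Injective g) (hf : Function.Surjective f)
    (hex : LinearMap.range g.hom = LinearMap.ker f.hom)
    (hmin : ∀ h : B ⟶ B, h ≫ f = f → IsIso h) :
    ∀ A' : ModuleCat.{0} Λ, Nontrivial A' → IsSummand A' A → ¬ ExtIsZero Λ 1 C A' := by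
  rintro A' hA' ⟨s, r, hsr⟩ hext
  obtain ⟨t, ht⟩ := ModuleCat.exists_comp_eq_of_extIsZero_one hg hf hex hext r
  have hgf : g ≫ f = 0 := by ext a; exact hex.le ⟨a, rfl⟩
  have hzero : IsZero A' := IsRightMinimal.isZero_of_comp_eq_zero (k := s ≫ g) (t := t) hmin
    (by rw [Category.assoc, hgf, comp_zero]) (by rw [Category.assoc, ht, hsr])
  exact not_subsingleton A' ((ModuleCat.isZero_iff_subsingleton).1 hzero)

/-- if `f` is right minimal in a non-split short exact sequence, then
`Ext¹(C, A') ≠ 0` for every non-zero direct summand `A'` of `A`. -/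
theorem stmt3 (Λ : Type) [Ring Λ] [IsArtinianRing Λ]
    (A B C : ModuleCat.{0} Λ)
    (hA : Module.Finite Λ A) (hB : Module.Finite Λ B) (hC : Module.Finite Λ C)
    (g : A ⟶ B) (f : B ⟶ C)
    (hg : Function.Injective g) (hf : Function.Surjective f)
    (hex : LinearMap.range g.hom = LinearMap.ker f.hom)
    (hns : ¬ ∃ s : C ⟶ B, s ≫ f = 𝟙 C)
    (hmin : ∀ h : B ⟶ B, h ≫ f = f → IsIso h) :
    ∀ A' : ModuleCat.{0} Λ, Nontrivial A' → IsSummand A' A → ¬ ExtIsZero Λ 1 C A' :=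
  stmt3_general Λ A B C g f hg hf hex hmin
end

section
/- Let M ∈ mod Λ be an indecomposable non-injective module whose injective envelope I⁰(M) is projective. Then appending the quotient map I⁰(M) → I⁰(M)/M to a minimal projective resolution of M yields a minimal projective resolution of I⁰(M)/M; in particular pd(I⁰(M)/M) = pd(M) + 1. -/
open CategoryTheory CategoryTheory.Limits

/-!
Since `M` is indecomposable of finite length and not injective, Fitting's lemma makes every
endomorphism of `M` that factors through the injective module `I` nilpotent. If `N + M = I`,
projectivity of `I` lifts `I → I/N` through the epimorphism `M → I/N` to some `h : I → M`; then
`1 - h ∘ f` maps `M` into `N`, and it is invertible since `h ∘ f` is nilpotent, so `M ⊆ N = I`.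
Hence `I → I/M` is a projective cover. Projective covers are unique up to isomorphism, so a
minimal resolution of `I/M` starts with `I` and continues with one of `M`.
-/
open CategoryTheory

variable {Λ : Type} [Ring Λ]

namespace IsProjCover

variable {P Q : ModuleCat.{0} Λ} {p : P ⟶ Q}

theorem surjective_of_surjective_comp (hp : IsProjCover p) {X : ModuleCat.{0} Λ} (u : X ⟶ P)
    (hu : Function.Surjective (u ≫ p)) : Function.Surjective u := by
  refine LinearMap.range_eq_top.mp (hp.2.2 _ ?_)
  rw [← LinearMap.range_comp]
  exact LinearMap.range_eq_top.mpr hu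

theorem exists_iso_hom_comp_eq (hp : IsProjCover p) {P' : ModuleCat.{0} Λ} {p' : P' ⟶ Q}
    (hp' : IsProjCover p') : ∃ φ : P' ≅ P, φ.hom ≫ p = p' := by
  have := hp.1
  have := hp'.1
  have : Epi p := (ModuleCat.epi_iff_surjective p).mpr hp.2.1
  let φ : P' ⟶ P := Projective.factorThru p' p
  have hφ : φ ≫ p = p' := Projective.factorThru_comp p' p
  have : Epi φ := (ModuleCat.epi_iff_surjective φ).mpr <|
    hp.surjective_of_surjective_comp φ (hφ ▸ hp'.2.1)
  let s : P ⟶ P' := Projective.factorThru (𝟙 P) φ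
  have hs : s ≫ φ = 𝟙 P := Projective.factorThru_comp _ _
  have hs_surj : Function.Surjective s :=
    hp'.surjective_of_surjective_comp s <| by
      rw [← hφ, ← Category.assoc, hs, Category.id_comp]
      exact hp.2.1
  have hs_inj : Function.Injective s :=
    (ModuleCat.mono_iff_injective s).mp (mono_of_mono_fac hs)
  have : IsIso s := (ConcreteCategory.isIso_iff_bijective s).mpr ⟨hs_inj, hs_surj⟩
  have : IsIso (s ≫ φ) := hs ▸ inferInstance
  have : IsIso φ := IsIso.of_isIso_comp_left s φ
  exact ⟨asIso φ, hφ⟩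

theorem injective_of_projective (hp : IsProjCover p) [Projective Q] : Function.Injective p := by
  obtain ⟨φ, hφ⟩ := hp.exists_iso_hom_comp_eq (p' := 𝟙 Q)
    ⟨inferInstance, Function.surjective_id, fun N hN => by simpa using hN⟩
  have : p = φ.inv := by
    rw [← Category.id_comp p, ← φ.inv_hom_id, Category.assoc, hφ, Category.comp_id]
  exact (ModuleCat.mono_iff_injective p).mp (this ▸ inferInstance)

theorem not_projective_of_range_eq_ker (hp : IsProjCover p) {M : ModuleCat.{0} Λ} [Nontrivial M]
    {f : M ⟶ P} (hf : Function.Injective f) (hfp : LinearMap.range f.hom = LinearMap.ker p.hom) :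
    ¬ Projective Q := fun _ => by
  obtain ⟨m, hm⟩ := exists_ne (0 : M)
  have hfm : f m ∈ LinearMap.ker p.hom := hfp ▸ LinearMap.mem_range_self _ m
  exact hm (hf (hp.injective_of_projective (by simpa using hfm)))

theorem comp_iso (hp : IsProjCover p) {Q' : ModuleCat.{0} Λ} (e : Q ≅ Q') :
    IsProjCover (p ≫ e.hom) := by
  refine ⟨hp.1, e.toLinearEquiv.surjective.comp hp.2.1, fun N hN => hp.2.2 N ?_⟩
  have : (p ≫ e.hom).hom = e.toLinearEquiv.toLinearMap ∘ₗ p.hom := rfl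
  rwa [this, Submodule.map_comp, Submodule.map_eq_top_iff] at hN

theorem nonempty_iso_of_range_eq_ker (hp : IsProjCover p) {P' M M' : ModuleCat.{0} Λ}
    {p' : P' ⟶ Q} (hp' : IsProjCover p') {f : M ⟶ P} (hf : Function.Injective f)
    (hfp : LinearMap.range f.hom = LinearMap.ker p.hom) {f' : M' ⟶ P'}
    (hf' : Function.Injective f') (hfp' : LinearMap.range f'.hom = LinearMap.ker p'.hom) :
    Nonempty (M' ≅ M) := by
  obtain ⟨φ, hφ⟩ := hp.exists_iso_hom_comp_eq hp'
  have hrange : LinearMap.range (f' ≫ φ.hom).hom = LinearMap.range f.hom := by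
    rw [hfp, ModuleCat.hom_comp, LinearMap.range_comp, hfp', ← hφ, ModuleCat.hom_comp,
      LinearMap.ker_comp]
    exact Submodule.map_comap_eq_of_surjective φ.toLinearEquiv.surjective _
  have hinj : Function.Injective (f' ≫ φ.hom) := φ.toLinearEquiv.injective.comp hf'
  exact ⟨(LinearEquiv.ofInjective (f' ≫ φ.hom).hom hinj ≪≫ₗ
    LinearEquiv.ofEq _ _ hrange ≪≫ₗ (LinearEquiv.ofInjective _ hf).symm).toModuleIso⟩

end IsProjCover

theorem pdLE_zero_iff {M : ModuleCat.{0} Λ} : PdLE M 0 ↔ Projective M :=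
  ⟨fun ⟨_, hK, hproj⟩ => by cases hK; exact hproj, fun h => ⟨M, .zero M, h⟩⟩

theorem PdLE.of_iso {A B : ModuleCat.{0} Λ} (e : A ≅ B) {n : ℕ} (h : PdLE A n) : PdLE B n := by
  obtain ⟨K, hK, hproj⟩ := h
  cases hK with
  | zero => exact pdLE_zero_iff.mpr (Projective.of_iso e hproj)
  | succ p i hp hi hip hK₁ =>
    refine ⟨K, .succ (p ≫ e.hom) i (hp.comp_iso e) hi ?_ hK₁, hproj⟩
    rw [hip, ModuleCat.hom_comp]
    exact (LinearMap.ker_comp_of_ker_eq_bot _ e.toLinearEquiv.ker).symm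

theorem IsProjCover.pdLE_succ_iff {M P Q : ModuleCat.{0} Λ} {p : P ⟶ Q} (hp : IsProjCover p)
    {f : M ⟶ P} (hf : Function.Injective f) (hfp : LinearMap.range f.hom = LinearMap.ker p.hom)
    {n : ℕ} : PdLE Q (n + 1) ↔ PdLE M n := by
  refine ⟨fun ⟨K, hK, hproj⟩ => ?_, fun ⟨K, hK, hproj⟩ => ⟨K, .succ p f hp hf hfp hK, hproj⟩⟩
  cases hK with
  | succ p' f' hp' hf' hfp' hK' =>
    obtain ⟨e⟩ := hp.nonempty_iso_of_range_eq_ker hp' hf hfp hf' hfp'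
    exact PdLE.of_iso e ⟨K, hK', hproj⟩

theorem PdEq.succ_of_isProjCover {M P Q : ModuleCat.{0} Λ} {p : P ⟶ Q} (hp : IsProjCover p)
    {f : M ⟶ P} (hf : Function.Injective f) (hfp : LinearMap.range f.hom = LinearMap.ker p.hom)
    (hQ : ¬ Projective Q) {n : ℕ} (h : PdEq M n) : PdEq Q (n + 1) := by
  refine ⟨(hp.pdLE_succ_iff hf hfp).mpr h.1, fun m hm => ?_⟩
  cases m with
  | zero => exact absurd (pdLE_zero_iff.mp hm) hQ
  | succ m => exact Nat.succ_le_succ (h.2 m ((hp.pdLE_succ_iff hf hfp).mp hm))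

namespace Indec

variable {M : ModuleCat.{0} Λ} [IsArtinian Λ M] [IsNoetherian Λ M]

theorem isNilpotent_or_bijective (hM : Indec M) (g : Module.End Λ M) :
    IsNilpotent g ∨ Function.Bijective g := by
  obtain ⟨n, hcompl, hn⟩ :=
    (g.eventually_isCompl_ker_pow_range_pow.and (Filter.eventually_ge_atTop 1)).exists
  rcases hM.2 _ _ hcompl with hker | hrange
  · refine .inr (IsArtinian.bijective_of_injective_endomorphism g ?_)
    rw [← LinearMap.ker_eq_bot, ← le_bot_iff, ← hker, ← Nat.sub_add_cancel hn, pow_succ]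
    exact LinearMap.ker_le_ker_comp g _
  · exact .inl ⟨n, LinearMap.range_eq_bot.mp hrange⟩

theorem isNilpotent_comp_of_not_injective (hM : Indec M) (hMni : ¬ Injective M)
    {I : ModuleCat.{0} Λ} [Injective I] (f : M ⟶ I) (θ : I ⟶ M) : IsNilpotent (f ≫ θ).hom := by
  refine (hM.isNilpotent_or_bijective _).resolve_right fun hbij => hMni ?_
  have : IsIso (f ≫ θ) := (ConcreteCategory.isIso_iff_bijective _).mpr hbij
  exact Retract.injective ⟨f, θ ≫ inv (f ≫ θ), by rw [← Category.assoc, IsIso.hom_inv_id]⟩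

theorem isProjCover_of_ker_eq_range (hM : Indec M) (hMni : ¬ Injective M) {I Q : ModuleCat.{0} Λ}
    [Injective I] [Projective I] {f : M ⟶ I} {p : I ⟶ Q} (hp : Function.Surjective p)
    (hker : LinearMap.ker p.hom = LinearMap.range f.hom) : IsProjCover p := by
  refine ⟨inferInstance, hp, fun N hN => ?_⟩
  have hsup : N ⊔ LinearMap.range f.hom = ⊤ := by
    rw [← hker, ← Submodule.comap_map_eq, hN, Submodule.comap_top]
  let π : I ⟶ ModuleCat.of Λ (I ⧸ N) := ModuleCat.ofHom N.mkQ
  have : Epi (f ≫ π) := (ModuleCat.epi_iff_surjective _).mpr fun y => by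
    obtain ⟨x, rfl⟩ := N.mkQ_surjective y
    obtain ⟨n, hn, _, ⟨m, rfl⟩, rfl⟩ := Submodule.mem_sup.mp (hsup ▸ Submodule.mem_top (x := x))
    refine ⟨m, (Submodule.Quotient.eq N).mpr ?_⟩
    exact (sub_add_cancel_right (f m) n).symm ▸ neg_mem hn
  let h : I ⟶ M := Projective.factorThru π (f ≫ π)
  have hh : ∀ x, f (h x) - x ∈ N := fun x => (Submodule.Quotient.eq N).mp
    (ConcreteCategory.congr_hom (Projective.factorThru_comp π (f ≫ π)) x)
  have hunit := (hM.isNilpotent_comp_of_not_injective hMni f h).isUnit_one_sub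
  have hfN : LinearMap.range f.hom ≤ N := by
    rintro _ ⟨m, rfl⟩
    obtain ⟨m', rfl⟩ := ((Module.End.isUnit_iff _).mp hunit).2 m
    have hm' : f ((1 - (f ≫ h).hom) m') = -(f (h (f m')) - f m') := by simp
    rw [hm']
    exact neg_mem (hh (f m'))
  rwa [sup_eq_left.mpr hfN] at hsup

end Indec

/-- if `M` is indecomposable non-injective and its injective envelope
`I` is projective, then `I ⟶ I/M` is a projective cover, appending it to a minimal
projective resolution of `M` gives a minimal projective resolution of `I/M`, and
`pd (I/M) = pd M + 1`. -/
theorem stmt5 (Λ : Type) [Ring Λ] [IsArtinianRing Λ]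
    (M I Q : ModuleCat.{0} Λ)
    (hMf : Module.Finite Λ M) (hM : Indec M) (hMni : ¬ Injective M)
    (f : M ⟶ I) (hf : IsInjEnv f) (hIproj : Projective I)
    (p : I ⟶ Q) (hp : Function.Surjective p)
    (hker : LinearMap.ker p.hom = LinearMap.range f.hom) :
    IsProjCover p ∧ (∀ (n : ℕ) (K : ModuleCat.{0} Λ),
      IsSyzygy n K M → IsSyzygy (n + 1) K Q) ∧
    ∀ n : ℕ, PdEq M n → PdEq Q (n + 1) := by
  obtain ⟨hIinj, hfinj, -⟩ := hf
  have hcover : IsProjCover p := hM.isProjCover_of_ker_eq_range hMni hp hker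
  have : Nontrivial M := hM.1
  exact ⟨hcover, fun n K hK => .succ p f hcover hfinj hker.symm hK,
    fun n hn => hn.succ_of_isProjCover hcover hfinj hker.symm
      (hcover.not_projective_of_range_eq_ker hfinj hker.symm)⟩
end
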